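/- arXiv:1806.08631 — 2 statements merged into one kernel-verified Lean document; each statement's English description precedes it below -/
import Mathlib

section
/- Let X and Y be locally isomorphic Λ-lattices such that there exists an isomorphism of 𝓜-lattices f : 𝓜X → 𝓜Y. Then f restricts to an isomorphism f|_X : X → Y of Λ-lattices if and only if f(X) ⊆ Y. -/
open Submodule Function

/-- A submodule is stable under (left multiplication by) a set `S` of operators. -/
def SetStable {A V R₀ : Type*} [Semiring R₀] [AddCommMonoid V] [Module R₀ V] [SMul A V]
    (S : Set A) (X : Submodule R₀ V) : Prop :=
  ∀ a ∈ S, ∀ x ∈ X, a • x ∈ X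

/-- A linear map `f : X → Y` intertwines the action of every element of `S`. -/
def IsEquivMap {A V W R₀ : Type*} [Semiring R₀] [AddCommMonoid V] [AddCommMonoid W]
    [Module R₀ V] [Module R₀ W] [SMul A V] [SMul A W]
    (S : Set A) (X : Submodule R₀ V) (Y : Submodule R₀ W) (f : X →ₗ[R₀] Y) : Prop :=
  ∀ a ∈ S, ∀ (v : V) (hv : v ∈ X) (hav : a • v ∈ X),
    ((f ⟨a • v, hav⟩ : Y) : W) = a • ((f ⟨v, hv⟩ : Y) : W)

/-- There exists an isomorphism of lattices, i.e. a bijective `R₀`-linear map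
intertwining the action of every element of `S`. -/
def ExistsLatIso {A V W R₀ : Type*} [Semiring R₀] [AddCommMonoid V] [AddCommMonoid W]
    [Module R₀ V] [Module R₀ W] [SMul A V] [SMul A W]
    (S : Set A) (X : Submodule R₀ V) (Y : Submodule R₀ W) : Prop :=
  ∃ f : X →ₗ[R₀] Y, Function.Bijective f ∧ IsEquivMap S X Y f

/-- `Λ` is an `𝒪`-order in the `K`-algebra `A`: it is a subring that is finitely
generated as an `𝒪`-module and spans `A` over `K`. -/
def IsOrder (𝒪 K A : Type*) [CommRing 𝒪] [Field K] [Ring A] [Algebra 𝒪 K] [Algebra K A]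
    [Algebra 𝒪 A] (Λ : Subalgebra 𝒪 A) : Prop :=
  (Subalgebra.toSubmodule Λ).FG ∧ Submodule.span K (Λ : Set A) = ⊤

/-- The localization `𝒪_𝔭` of `𝒪` at a prime `𝔭`, realized as a subalgebra of the
fraction field `K`. -/
noncomputable def localizationAt (𝒪 K : Type*) [CommRing 𝒪] [IsDomain 𝒪] [Field K]
    [Algebra 𝒪 K] [IsFractionRing 𝒪 K] (𝔭 : Ideal 𝒪) (h𝔭 : 𝔭.IsPrime) : Subalgebra 𝒪 K :=
  letI := h𝔭
  Localization.subalgebra K 𝔭.primeCompl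
    (fun s hs => mem_nonZeroDivisors_of_ne_zero (fun h => hs (by simp [h])))

/-- The localization `X_𝔭 = 𝒪_𝔭 X` of a lattice `X`, as an `𝒪_𝔭`-submodule. -/
noncomputable def locLattice (𝒪 K : Type*) [CommRing 𝒪] [IsDomain 𝒪] [Field K]
    [Algebra 𝒪 K] [IsFractionRing 𝒪 K] {V : Type*} [AddCommGroup V] [Module K V] [Module 𝒪 V]
    (𝔭 : Ideal 𝒪) (h𝔭 : 𝔭.IsPrime) (X : Submodule 𝒪 V) :
    Submodule (localizationAt 𝒪 K 𝔭 h𝔭) V :=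
  Submodule.span (localizationAt 𝒪 K 𝔭 h𝔭) (X : Set V)

/-- Two `Λ`-lattices are locally isomorphic (lie in the same genus) if their
localizations at every maximal ideal `𝔭` of `𝒪` are isomorphic `Λ_𝔭`-lattices. -/
noncomputable def LocallyIsomorphic (𝒪 K A : Type*) [CommRing 𝒪] [IsDomain 𝒪] [Field K]
    [Algebra 𝒪 K] [IsFractionRing 𝒪 K] [Ring A] [Algebra 𝒪 A]
    {V W : Type*} [AddCommGroup V] [Module K V] [Module 𝒪 V] [Module A V]
    [AddCommGroup W] [Module K W] [Module 𝒪 W] [Module A W]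
    (Λ : Subalgebra 𝒪 A) (X : Submodule 𝒪 V) (Y : Submodule 𝒪 W) : Prop :=
  ∀ (𝔭 : Ideal 𝒪) (h𝔭 : 𝔭.IsMaximal),
    ExistsLatIso (Λ : Set A) (locLattice 𝒪 K 𝔭 h𝔭.isPrime X) (locLattice 𝒪 K 𝔭 h𝔭.isPrime Y)

/-- `𝓜` is a maximal `𝒪`-order in `A`. -/
def IsMaximalOrder (𝒪 K A : Type*) [CommRing 𝒪] [Field K] [Ring A] [Algebra 𝒪 K]
    [Algebra K A] [Algebra 𝒪 A] (𝓜 : Subalgebra 𝒪 A) : Prop :=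
  IsOrder 𝒪 K A 𝓜 ∧ ∀ Λ'' : Subalgebra 𝒪 A, IsOrder 𝒪 K A Λ'' → 𝓜 ≤ Λ'' → 𝓜 = Λ''

/-! Extend `f` to a `K`-linear map `F`. Assuming `F(X) ⊆ Y`, the equality `F(X) = Y` can be
checked at every maximal ideal `𝔭`. There the local isomorphism `X_𝔭 ≅ Y_𝔭` extends to a
`K`-linear, `A`-equivariant map `Φ`, and both `F` and `Φ` map `𝓜X_𝔭` onto `𝓜Y_𝔭`; hence
`χ = F⁻¹ ∘ Φ` is a surjective, and so bijective, endomorphism of the noetherian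
`𝒪_𝔭`-module `𝓜X_𝔭`. From `F(X_𝔭) ⊆ Y_𝔭 = Φ(X_𝔭)` we get `X_𝔭 ⊆ χ(X_𝔭)`; the ascending
chain `χⁿ(X_𝔭)` stabilises, which forces `χ(X_𝔭) = X_𝔭`, i.e. `F(X_𝔭) = Y_𝔭`. -/

open scoped Pointwise nonZeroDivisors

section

variable {R M : Type*} [CommRing R] [AddCommGroup M] [Module R M]

theorem Submodule.map_eq_of_le_map_of_injective [IsNoetherian R M] {g : M →ₗ[R] M}
    (hg : Injective g) {N : Submodule R M} (h : N ≤ N.map g) : N.map g = N := by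
  have hmono : Monotone fun n ↦ N.map (g ^ n) := monotone_nat_of_le_succ fun n ↦ by
    rw [pow_succ, Module.End.mul_eq_comp, map_comp]
    exact map_mono h
  obtain ⟨n, hn⟩ := monotone_stabilizes_iff_noetherian.mpr ‹_› ⟨_, hmono⟩
  have hstab : N.map (g ^ n) = (N.map g).map (g ^ n) := by
    rw [← map_comp, ← Module.End.mul_eq_comp, ← pow_succ]
    exact hn (n + 1) n.le_succ
  have hgn : Injective (g ^ n) := by
    rw [Module.End.coe_pow]
    exact hg.iterate n
  exact (map_injective_of_injective hgn hstab).symm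

theorem Submodule.map_eq_map_of_map_le_map {W : Type*} [AddCommGroup W] [Module R W]
    (F Φ : M →ₗ[R] W) {N X : Submodule R M} [IsNoetherian R N] (hXN : X ≤ N)
    (hF : Set.InjOn F N) (hN : N.map F = N.map Φ) (hX : X.map F ≤ X.map Φ) :
    X.map F = X.map Φ := by
  have hFN : Injective (F ∘ₗ N.subtype) := fun a b h ↦ Subtype.ext (hF a.2 b.2 h)
  have hrange : LinearMap.range (F ∘ₗ N.subtype) = N.map Φ := by
    rw [LinearMap.range_comp, range_subtype, hN]
  let e := LinearEquiv.ofInjective _ hFN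
  let χ : N →ₗ[R] N := e.symm.toLinearMap ∘ₗ
    (Φ ∘ₗ N.subtype).codRestrict _ fun n ↦ hrange ▸ mem_map_of_mem n.2
  have hχ (n : N) : F (χ n) = Φ n := congrArg Subtype.val (e.apply_symm_apply _)
  have hχsurj : Surjective χ := fun n ↦ by
    obtain ⟨n', hn', hn'n⟩ : F n ∈ N.map Φ := hN ▸ mem_map_of_mem n.2
    exact ⟨⟨n', hn'⟩, Subtype.ext (hF (χ _).2 n.2 (by rw [hχ]; exact hn'n))⟩
  let X' := X.comap N.subtype
  have hX' : X' ≤ X'.map χ := fun x hx ↦ by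
    obtain ⟨x', hx', hx'x⟩ : F x ∈ X.map Φ := hX (mem_map_of_mem hx)
    exact ⟨⟨x', hXN hx'⟩, hx', Subtype.ext (hF (χ _).2 x.2 (by rw [hχ]; exact hx'x))⟩
  have hχX' := map_eq_of_le_map_of_injective
    (IsNoetherian.injective_of_surjective_endomorphism χ hχsurj) hX'
  refine le_antisymm hX ?_
  rintro _ ⟨x, hx, rfl⟩
  have hχx : χ ⟨x, hXN hx⟩ ∈ X' := hχX' ▸ mem_map_of_mem (show ⟨x, hXN hx⟩ ∈ X' from hx)
  exact ⟨_, hχx, hχ _⟩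

theorem Submodule.exists_bijective_of_injOn {W : Type*} [AddCommGroup W] [Module R W]
    (F : M →ₗ[R] W) {X : Submodule R M} {Y : Submodule R W} (hF : Set.InjOn F X)
    (hXY : X.map F = Y) : ∃ g : X →ₗ[R] Y, Bijective g ∧ ∀ x : X, (g x : W) = F x := by
  have hinj : Injective (F ∘ₗ X.subtype) := fun a b h ↦ Subtype.ext (hF a.2 b.2 h)
  let e := (LinearEquiv.ofInjective _ hinj).trans
    (LinearEquiv.ofEq _ _ (by rw [LinearMap.range_comp, range_subtype, hXY]))
  exact ⟨e, e.bijective, fun _ ↦ rfl⟩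

end

section Localization

variable {R R' V W : Type*} [CommRing R] [CommRing R'] [Algebra R R']
  [AddCommGroup V] [Module R V] [Module R' V] [IsScalarTower R R' V]

theorem Submodule.exists_smul_mem_of_mem_span (S : Submonoid R) [IsLocalization S R']
    (P : Submodule R V) {v : V}
    (hv : v ∈ span R' (P : Set V)) : ∃ s ∈ S, s • v ∈ P := by
  have := isLocalizedModule_id S V R'
  rw [← Set.image_id (P : Set V), ← LinearMap.id_coe (R := R),
    ← localized'_eq_span R' S LinearMap.id P] at hv
  obtain ⟨m, hm, s, rfl⟩ := hv
  exact ⟨s, s.2, by rwa [← Submonoid.smul_def, IsLocalizedModule.mk'_cancel']⟩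

theorem LinearMap.injOn_span_of_isLocalization (S : Submonoid R) [IsLocalization S R']
    [AddCommGroup W] [Module R' W] (F : V →ₗ[R'] W) {P : Submodule R V} (hF : Set.InjOn F P) :
    Set.InjOn F (span R' (P : Set V)) := by
  intro u hu v hv huv
  obtain ⟨s, hs, hsP⟩ := exists_smul_mem_of_mem_span S P (sub_mem hu hv)
  have hF0 : F (s • (u - v)) = F 0 := by
    rw [← algebraMap_smul R', map_smul, map_sub, huv, sub_self, smul_zero, map_zero]
  have := hF hsP (zero_mem P) hF0
  rwa [← algebraMap_smul R', (IsLocalization.map_units R' (⟨s, hs⟩ : S)).smul_eq_zero,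
    sub_eq_zero] at this

end Localization

section FractionField

variable {R K V W : Type*} [CommRing R] [Field K] [Algebra R K] [IsFractionRing R K]
  [AddCommGroup V] [Module K V] [Module R V] [IsScalarTower R K V]
  [AddCommGroup W] [Module K W] [Module R W] [IsScalarTower R K W]

theorem LinearMap.exists_extend_of_isFractionRing (P : Submodule R V) (g : P →ₗ[R] W) :
    ∃ F : V →ₗ[K] W, ∀ p : P, F p = g p := by
  have := isLocalizedModule_id R⁰ W K
  have := isLocalizedModule_id R⁰ V K
  let ι := P.toLocalized' K R⁰ LinearMap.id
  obtain ⟨F, hF⟩ := LinearMap.exists_extend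
    (IsLocalizedModule.mapExtendScalars R⁰ ι LinearMap.id K g)
  exact ⟨F, fun p ↦ by simpa [ι] using congrArg (fun φ ↦ φ (ι p)) hF⟩

theorem LinearMap.exists_extend_of_bijective {P : Submodule R V} {Q : Submodule R W}
    (f : P →ₗ[R] Q) (hf : Bijective f) :
    ∃ F : V →ₗ[K] W, (∀ p : P, F p = f p) ∧ Set.InjOn F P ∧ F '' P = Q := by
  obtain ⟨F, hF⟩ := exists_extend_of_isFractionRing (K := K) P (Q.subtype ∘ₗ f)
  refine ⟨F, hF, fun u hu v hv huv ↦ ?_, ?_⟩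
  · have := hf.1 (Subtype.ext ((hF ⟨u, hu⟩).symm.trans (huv.trans (hF ⟨v, hv⟩))))
    exact congrArg Subtype.val this
  · ext w
    refine ⟨?_, fun hw ↦ ?_⟩
    · rintro ⟨v, hv, rfl⟩
      exact (hF ⟨v, hv⟩).symm ▸ (f ⟨v, hv⟩).2
    · obtain ⟨v, hv⟩ := hf.2 ⟨w, hw⟩
      exact ⟨v, v.2, (hF v).trans (congrArg Subtype.val hv)⟩

end FractionField

section localizationAt

variable (𝒪 K : Type*) [CommRing 𝒪] [IsDomain 𝒪] [Field K] [Algebra 𝒪 K] [IsFractionRing 𝒪 K]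
  (𝔭 : Ideal 𝒪) [h𝔭 : 𝔭.IsPrime]

instance : IsLocalization 𝔭.primeCompl (localizationAt 𝒪 K 𝔭 h𝔭) :=
  Localization.subalgebra.isLocalization_subalgebra _ _ _

instance : IsFractionRing (localizationAt 𝒪 K 𝔭 h𝔭) K :=
  Localization.subalgebra.isFractionRing _ _ _

instance [IsNoetherianRing 𝒪] : IsNoetherianRing (localizationAt 𝒪 K 𝔭 h𝔭) :=
  IsLocalization.isNoetherianRing 𝔭.primeCompl _ ‹_›

end localizationAt

theorem Submodule.mem_of_forall_mem_span_localizationAt {𝒪 K W : Type*} [CommRing 𝒪]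
    [IsDomain 𝒪] [Field K] [Algebra 𝒪 K] [IsFractionRing 𝒪 K] [AddCommGroup W] [Module K W]
    [Module 𝒪 W] [IsScalarTower 𝒪 K W] (P : Submodule 𝒪 W) {y : W}
    (h : ∀ (𝔪 : Ideal 𝒪) (h𝔪 : 𝔪.IsMaximal),
      y ∈ span (localizationAt 𝒪 K 𝔪 h𝔪.isPrime) (P : Set W)) :
    y ∈ P := by
  by_contra hy
  -- the ideal of denominators of `y` with respect to `P`
  let I : Ideal 𝒪 := P.comap (LinearMap.toSpanSingleton 𝒪 W y)
  have hI : I ≠ ⊤ := fun hI ↦ hy <| by simpa [I] using (hI ▸ mem_top : (1 : 𝒪) ∈ I)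
  obtain ⟨𝔪, h𝔪, hI𝔪⟩ := I.exists_le_maximal hI
  obtain ⟨s, hs, hsy⟩ := exists_smul_mem_of_mem_span 𝔪.primeCompl P (h 𝔪 h𝔪)
  exact hs (hI𝔪 hsy)

section SetSMul

variable {R A M M' : Type*} [CommRing R] [Monoid A] [AddCommGroup M] [Module R M]
  [DistribMulAction A M] [SMulCommClass A R M] [AddCommGroup M'] [Module R M']
  [DistribMulAction A M'] [SMulCommClass A R M']

theorem Submodule.span_setOf_smul_eq (S : Set A) (X : Submodule R M) :
    span R {v : M | ∃ a ∈ S, ∃ x ∈ X, v = a • x} = S • X := by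
  rw [← span_eq X, set_smul_span, span_eq]
  congr 1
  ext v
  simp [Set.mem_smul, eq_comm]

theorem Submodule.map_set_smul_of_map_smul (Φ : M →ₗ[R] M') (S : Set A) (N : Submodule R M)
    (h : ∀ a ∈ S, ∀ x ∈ N, Φ (a • x) = a • Φ x) : (S • N).map Φ = S • N.map Φ := by
  have himage : Φ '' (S • (N : Set M)) = S • (Φ '' N) := by
    simp only [← Set.image2_smul, Set.image_image2, Set.image2_image_right]
    exact Set.image2_congr h
  rw [← span_eq N, set_smul_span, map_span, himage, ← set_smul_span, ← map_span, span_eq]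

theorem SetStable.span {R₀ : Type*} [CommRing R₀] [Module R₀ M] {S : Set A}
    {X : Submodule R₀ M} (hX : SetStable S X) : SetStable S (Submodule.span R (X : Set M)) := by
  have : S • Submodule.span R (X : Set M) ≤ Submodule.span R (X : Set M) := by
    rw [Submodule.set_smul_span]
    exact Submodule.span_mono (Set.smul_subset_iff.2 hX)
  exact fun a ha v hv ↦ this (Submodule.mem_set_smul_of_mem_mem ha hv)

theorem Submodule.span_coe_set_smul {R₀ : Type*} [CommRing R₀] [Algebra R₀ R] [Module R₀ M]
    [IsScalarTower R₀ R M] [SMulCommClass A R₀ M] (S : Set A) (X : Submodule R₀ M) :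
    span R ((S • X : Submodule R₀ M) : Set M) = S • span R (X : Set M) := by
  rw [← span_eq X, set_smul_span, span_span_of_tower, span_span_of_tower, set_smul_span]

end SetSMul

theorem Submodule.FG.set_smul {R A M : Type*} [CommRing R] [Ring A] [Algebra R A]
    [AddCommGroup M] [Module R M] [Module A M] [IsScalarTower R A M] {I : Submodule R A}
    (hI : I.FG) {N : Submodule R M} (hN : N.FG) : ((I : Set A) • N).FG := by
  classical
  obtain ⟨sI, rfl⟩ := hI
  obtain ⟨sN, rfl⟩ := hN
  refine ⟨sI • sN, ?_⟩
  rw [set_smul_span, Finset.coe_smul]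
  refine le_antisymm (span_mono (Set.smul_subset_smul_right subset_span)) (span_le.2 ?_)
  rintro _ ⟨a, ha, x, hx, rfl⟩
  exact smul_mem_span_smul_of_mem ha hx

section Equivariant

variable {K A V W : Type*} [Field K] [Ring A] [Algebra K A]
  [AddCommGroup V] [Module K V] [Module A V] [IsScalarTower K A V]
  [AddCommGroup W] [Module K W] [Module A W] [IsScalarTower K A W]

theorem LinearMap.map_smul_of_mem_span (Φ : V →ₗ[K] W) {S : Set A} {T : Set V}
    (h : ∀ a ∈ S, ∀ v ∈ T, Φ (a • v) = a • Φ v) {a : A} (ha : a ∈ span K S) {v : V}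
    (hv : v ∈ span K T) : Φ (a • v) = a • Φ v := by
  induction ha using span_induction with
  | mem a ha =>
    induction hv using span_induction with
    | mem v hv => exact h a ha v hv
    | zero => simp
    | add v w _ _ hv hw => rw [smul_add, map_add, hv, hw, map_add, smul_add]
    | smul k v _ hv => rw [smul_comm, map_smul, hv, map_smul, smul_comm]
  | zero => simp
  | add a b _ _ ha hb => rw [add_smul, map_add, ha, hb, add_smul]
  | smul k a _ ha => rw [smul_assoc, map_smul, ha, smul_assoc]

theorem ExistsLatIso.exists_linearMap {R : Type*} [CommRing R] [Algebra R K]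
    [IsFractionRing R K] [Module R V] [IsScalarTower R K V] [Module R W] [IsScalarTower R K W]
    {Λ : Set A} (hΛ : span K Λ = ⊤) {P : Submodule R V} (hP : SetStable Λ P)
    {Q : Submodule R W} (h : ExistsLatIso Λ P Q) :
    ∃ Φ : V →ₗ[K] W, P.map (Φ.restrictScalars R) = Q ∧
      ∀ a : A, ∀ v ∈ span K (P : Set V), Φ (a • v) = a • Φ v := by
  obtain ⟨φ, hφ, hφΛ⟩ := h
  obtain ⟨Φ, hΦ, -, hΦP⟩ := LinearMap.exists_extend_of_bijective (K := K) φ hφ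
  refine ⟨Φ, SetLike.coe_injective (by rw [map_coe]; exact hΦP), fun a v hv ↦
    Φ.map_smul_of_mem_span (fun a ha v hv ↦ ?_) (hΛ ▸ mem_top) hv⟩
  rw [hΦ ⟨v, hv⟩, hΦ ⟨a • v, hP a ha v hv⟩]
  exact hφΛ a ha v hv (hP a ha v hv)

end Equivariant

theorem subset_span_image_of_existsLatIso {𝒪 K A V W : Type*} [CommRing 𝒪] [Field K]
    [Algebra 𝒪 K] [Ring A] [Algebra K A]
    [AddCommGroup V] [Module K V] [Module 𝒪 V] [IsScalarTower 𝒪 K V] [Module A V]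
    [IsScalarTower K A V] [SMulCommClass A 𝒪 V]
    [AddCommGroup W] [Module K W] [Module 𝒪 W] [IsScalarTower 𝒪 K W] [Module A W]
    [IsScalarTower K A W] [SMulCommClass A 𝒪 W]
    (R : Subalgebra 𝒪 K) (S : Submonoid 𝒪) [IsLocalization S R] [IsFractionRing R K]
    [IsNoetherianRing R] {Λ 𝓜 : Set A} (hΛ : span K Λ = ⊤) (h𝓜 : 1 ∈ 𝓜)
    {X : Submodule 𝒪 V} (hXst : SetStable Λ X) (hMX : (𝓜 • X).FG) {Y : Submodule 𝒪 W}
    {F : V →ₗ[K] W} (hFinj : Set.InjOn F ↑(𝓜 • X)) (hFM : F '' ↑(𝓜 • X) = ↑(𝓜 • Y))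
    (hFX : F '' X ⊆ Y) (hiso : ExistsLatIso Λ (span R (X : Set V)) (span R (Y : Set W))) :
    (Y : Set W) ⊆ span R (F '' X) := by
  obtain ⟨Φ, hΦX, hΦ⟩ := hiso.exists_linearMap hΛ hXst.span
  set XR := span R (X : Set V)
  have hM : span R ↑(𝓜 • X) = 𝓜 • XR := span_coe_set_smul _ _
  have : IsNoetherian R ↥(𝓜 • XR) := isNoetherian_of_fg_of_noetherian _ (hM ▸ hMX.span)
  have hXM : XR ≤ 𝓜 • XR := fun v hv ↦ one_smul A v ▸ mem_set_smul_of_mem_mem h𝓜 hv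
  have hFinjM : Set.InjOn F ↑(𝓜 • XR) :=
    hM ▸ (F.restrictScalars R).injOn_span_of_isLocalization S hFinj
  have hFΦ : (𝓜 • XR).map (F.restrictScalars R) = (𝓜 • XR).map (Φ.restrictScalars R) := by
    rw [map_set_smul_of_map_smul (Φ.restrictScalars R) 𝓜 XR
      fun a _ v hv ↦ hΦ a v (subset_span hv), hΦX, ← hM, map_span,
      LinearMap.coe_restrictScalars, hFM, span_coe_set_smul]
  have hX : XR.map (F.restrictScalars R) ≤ XR.map (Φ.restrictScalars R) := by
    rw [hΦX, map_span]
    exact span_mono hFX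
  have hXY := map_eq_map_of_map_le_map _ _ hXM hFinjM hFΦ hX
  rw [hΦX, map_span] at hXY
  exact fun y hy ↦ hXY ▸ subset_span hy

theorem stmt_3_general
    (𝒪 : Type*) [CommRing 𝒪] [IsDedekindDomain 𝒪]
    (K : Type*) [Field K] [Algebra 𝒪 K] [IsFractionRing 𝒪 K]
    (A : Type*) [Ring A] [Algebra K A] [Algebra 𝒪 A] [IsScalarTower 𝒪 K A]
    (Λ 𝓜 : Subalgebra 𝒪 A) (hΛ : IsOrder 𝒪 K A Λ)
    (h𝓜 : IsMaximalOrder 𝒪 K A 𝓜) (hΛ𝓜 : Λ ≤ 𝓜)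
    (V : Type*) [AddCommGroup V] [Module K V] [Module 𝒪 V] [IsScalarTower 𝒪 K V]
    [Module A V] [IsScalarTower K A V]
    (W : Type*) [AddCommGroup W] [Module K W] [Module 𝒪 W] [IsScalarTower 𝒪 K W]
    [Module A W] [IsScalarTower K A W]
    (X : Submodule 𝒪 V) (hXfg : X.FG) (hXst : SetStable (Λ : Set A) X)
    (Y : Submodule 𝒪 W)
    (hloc : LocallyIsomorphic 𝒪 K A Λ X Y)
    (f : (Submodule.span 𝒪 {v : V | ∃ a ∈ 𝓜, ∃ x ∈ X, v = a • x}) →ₗ[𝒪]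
      (Submodule.span 𝒪 {w : W | ∃ a ∈ 𝓜, ∃ y ∈ Y, w = a • y}))
    (hfb : Function.Bijective f)
    (hfe : IsEquivMap (𝓜 : Set A)
      (Submodule.span 𝒪 {v : V | ∃ a ∈ 𝓜, ∃ x ∈ X, v = a • x})
      (Submodule.span 𝒪 {w : W | ∃ a ∈ 𝓜, ∃ y ∈ Y, w = a • y}) f) :
    -- `f` restricts to an isomorphism of `Λ`-lattices `X → Y`
    (∃ g : X →ₗ[𝒪] Y, Function.Bijective g ∧ IsEquivMap (Λ : Set A) X Y g ∧
      ∀ (x : V) (hx : x ∈ X)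
        (hx' : x ∈ Submodule.span 𝒪 {v : V | ∃ a ∈ 𝓜, ∃ x ∈ X, v = a • x}),
        ((g ⟨x, hx⟩ : Y) : W) = ((f ⟨x, hx'⟩ :
          Submodule.span 𝒪 {w : W | ∃ a ∈ 𝓜, ∃ y ∈ Y, w = a • y}) : W))
    ↔
    -- `f(X) ⊆ Y`
    (∀ (x : V) (hx' : x ∈ Submodule.span 𝒪 {v : V | ∃ a ∈ 𝓜, ∃ x ∈ X, v = a • x}),
      x ∈ X → ((f ⟨x, hx'⟩ :
        Submodule.span 𝒪 {w : W | ∃ a ∈ 𝓜, ∃ y ∈ Y, w = a • y}) : W) ∈ Y) := by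
  have := IsScalarTower.to₁₃₄ 𝒪 K A V
  have := IsScalarTower.to₁₃₄ 𝒪 K A W
  refine ⟨fun ⟨g, _, _, hg⟩ x hx' hx ↦ hg x hx hx' ▸ (g ⟨x, hx⟩).2, fun hsub ↦ ?_⟩
  obtain ⟨F, hF, hFinj, hFM⟩ := LinearMap.exists_extend_of_bijective (K := K) f hfb
  have hXMX (x : V) (hx : x ∈ X) : x ∈ span 𝒪 {v : V | ∃ a ∈ 𝓜, ∃ x ∈ X, v = a • x} :=
    subset_span ⟨1, 𝓜.one_mem, x, hx, (one_smul A x).symm⟩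
  have hFX : F '' X ⊆ Y := by
    rintro _ ⟨x, hx, rfl⟩
    exact (hF ⟨x, hXMX x hx⟩).symm ▸ hsub x _ hx
  have hMX : span 𝒪 {v : V | ∃ a ∈ 𝓜, ∃ x ∈ X, v = a • x} = (𝓜 : Set A) • X :=
    span_setOf_smul_eq _ _
  have hMY : span 𝒪 {w : W | ∃ a ∈ 𝓜, ∃ y ∈ Y, w = a • y} = (𝓜 : Set A) • Y :=
    span_setOf_smul_eq _ _
  rw [hMX] at hFinj
  rw [hMX, hMY] at hFM
  have hXY : X.map (F.restrictScalars 𝒪) = Y := by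
    refine le_antisymm (map_le_iff_le_comap.2 fun x hx ↦ hFX ⟨x, hx, rfl⟩) fun y hy ↦ ?_
    refine mem_of_forall_mem_span_localizationAt (K := K) _ fun 𝔪 h𝔪 ↦ ?_
    rw [map_coe]
    exact subset_span_image_of_existsLatIso _ 𝔪.primeCompl hΛ.2 𝓜.one_mem hXst
      (h𝓜.1.1.set_smul hXfg) hFinj hFM hFX (hloc 𝔪 h𝔪) hy
  obtain ⟨g, hg, hgF⟩ := exists_bijective_of_injOn (F.restrictScalars 𝒪)
    (hFinj.mono fun x hx ↦ hMX ▸ hXMX x hx) hXY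
  refine ⟨g, hg, fun a ha v hv hav ↦ ?_, fun x hx hx' ↦ (hgF ⟨x, hx⟩).trans (hF ⟨x, hx'⟩)⟩
  rw [hgF, hgF]
  exact (hF ⟨_, hXMX _ hav⟩).trans <| (hfe a (hΛ𝓜 ha) v (hXMX v hv) (hXMX _ hav)).trans <|
    congrArg _ (hF ⟨v, hXMX v hv⟩).symm

/-- Let `X` and `Y` be locally isomorphic `Λ`-lattices and let
`f : 𝓜X → 𝓜Y` be an isomorphism of `𝓜`-lattices.  Then `f` restricts to an isomorphism
`f|_X : X → Y` of `Λ`-lattices if and only if `f(X) ⊆ Y`. -/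
theorem stmt_3
    (𝒪 : Type*) [CommRing 𝒪] [IsDomain 𝒪] [IsDedekindDomain 𝒪]
    (K : Type*) [Field K] [Algebra 𝒪 K] [IsFractionRing 𝒪 K]
    (hOK : ¬ Function.Surjective (algebraMap 𝒪 K))
    (A : Type*) [Ring A] [Algebra K A] [Algebra 𝒪 A] [IsScalarTower 𝒪 K A]
    [FiniteDimensional K A] [IsSemisimpleRing A] [Algebra.IsSeparable K A]
    (Λ 𝓜 : Subalgebra 𝒪 A) (hΛ : IsOrder 𝒪 K A Λ)
    (h𝓜 : IsMaximalOrder 𝒪 K A 𝓜) (hΛ𝓜 : Λ ≤ 𝓜)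
    (V : Type*) [AddCommGroup V] [Module K V] [Module 𝒪 V] [IsScalarTower 𝒪 K V]
    [Module A V] [IsScalarTower K A V]
    (W : Type*) [AddCommGroup W] [Module K W] [Module 𝒪 W] [IsScalarTower 𝒪 K W]
    [Module A W] [IsScalarTower K A W]
    (X : Submodule 𝒪 V) (hXfg : X.FG) (hXst : SetStable (Λ : Set A) X)
    (Y : Submodule 𝒪 W) (hYfg : Y.FG) (hYst : SetStable (Λ : Set A) Y)
    (hloc : LocallyIsomorphic 𝒪 K A Λ X Y)
    (f : (Submodule.span 𝒪 {v : V | ∃ a ∈ 𝓜, ∃ x ∈ X, v = a • x}) →ₗ[𝒪]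
      (Submodule.span 𝒪 {w : W | ∃ a ∈ 𝓜, ∃ y ∈ Y, w = a • y}))
    (hfb : Function.Bijective f)
    (hfe : IsEquivMap (𝓜 : Set A)
      (Submodule.span 𝒪 {v : V | ∃ a ∈ 𝓜, ∃ x ∈ X, v = a • x})
      (Submodule.span 𝒪 {w : W | ∃ a ∈ 𝓜, ∃ y ∈ Y, w = a • y}) f) :
    -- `f` restricts to an isomorphism of `Λ`-lattices `X → Y`
    (∃ g : X →ₗ[𝒪] Y, Function.Bijective g ∧ IsEquivMap (Λ : Set A) X Y g ∧
      ∀ (x : V) (hx : x ∈ X)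
        (hx' : x ∈ Submodule.span 𝒪 {v : V | ∃ a ∈ 𝓜, ∃ x ∈ X, v = a • x}),
        ((g ⟨x, hx⟩ : Y) : W) = ((f ⟨x, hx'⟩ :
          Submodule.span 𝒪 {w : W | ∃ a ∈ 𝓜, ∃ y ∈ Y, w = a • y}) : W))
    ↔
    -- `f(X) ⊆ Y`
    (∀ (x : V) (hx' : x ∈ Submodule.span 𝒪 {v : V | ∃ a ∈ 𝓜, ∃ x ∈ X, v = a • x}),
      x ∈ X → ((f ⟨x, hx'⟩ :
        Submodule.span 𝒪 {w : W | ∃ a ∈ 𝓜, ∃ y ∈ Y, w = a • y}) : W) ∈ Y) :=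
  stmt_3_general 𝒪 K A Λ 𝓜 hΛ h𝓜 hΛ𝓜 V W X hXfg hXst Y hloc f hfb hfe
end

section
/- Let X and Y be Λ-lattices, let S = End_𝓜(𝓜Y), identify T = End_Λ(Y) with the subring {s ∈ S : s(Y) ⊆ Y} of S, and let 𝕴 be a two-sided ideal of S contained in T that is full (i.e. 𝕴 spans End_A(K·𝓜Y) over K). Let f : 𝓜X → 𝓜Y be an isomorphism of 𝓜-lattices and let g, g′ ∈ Aut_𝓜(𝓜Y) with g′ − g ∈ 𝕴. If (g ∘ f)(X) ⊆ Y then (g′ ∘ f)(X) ⊆ Y. -/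
/-! If `h = (g' - g) ∘ g⁻¹`, then `g' ∘ f = h ∘ (g ∘ f) + g ∘ f`. Since `g⁻¹` is again
`𝓜`-linear and `𝕴` is a right ideal of `S`, `h ∈ 𝕴 ⊆ T`, so `h` maps `Y` into `Y`; hence so does
`g' ∘ f` on `X` once `g ∘ f` does. -/

open Submodule Function

theorem smulCommClass_of_isScalarTower (R K A W : Type*) [Monoid K] [SMul R K] [MulAction K W]
    [SMul R W] [IsScalarTower R K W] [SMul A W] [SMulCommClass K A W] :
    SMulCommClass R A W :=
  ⟨fun r a w => by rw [← smul_one_smul K r (a • w), ← smul_one_smul K r w, smul_comm]⟩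

theorem setStable_span_smul {R A W : Type*} [Semiring R] [Monoid A] [AddCommMonoid W]
    [Module R W] [DistribMulAction A W] [SMulCommClass R A W] (M : Submonoid A) (Y : Set W) :
    SetStable (M : Set A) (span R {w : W | ∃ a ∈ M, ∃ y ∈ Y, w = a • y}) := by
  intro a ha w hw
  induction hw using Submodule.span_induction with
  | mem w hw =>
    obtain ⟨b, hb, y, hy, rfl⟩ := hw
    exact subset_span ⟨a * b, M.mul_mem ha hb, y, hy, (mul_smul a b y).symm⟩
  | zero => simp
  | add u v _ _ hu hv => simpa only [smul_add] using add_mem hu hv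
  | smul r u _ hu => rw [← smul_comm r a u]; exact smul_mem _ r hu

theorem IsEquivMap.symm {A V W R₀ : Type*} [Semiring R₀] [AddCommMonoid V] [AddCommMonoid W]
    [Module R₀ V] [Module R₀ W] [SMul A V] [SMul A W] {S : Set A} {X : Submodule R₀ V}
    {Y : Submodule R₀ W} (e : X ≃ₗ[R₀] Y) (he : IsEquivMap S X Y e) (hX : SetStable S X) :
    IsEquivMap S Y X e.symm := by
  intro a ha v hv hav
  set u := e.symm ⟨v, hv⟩
  have hau : a • (u : V) ∈ X := hX a ha u u.2
  have he_au : e ⟨a • u, hau⟩ = ⟨a • v, hav⟩ := by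
    ext
    simpa [u] using he a ha u u.2 hau
  simp only [LinearEquiv.coe_coe, ← he_au, LinearEquiv.symm_apply_apply]
  rfl

theorem apply_mem_of_mapsTo_sub_comp_symm {R M M₂ : Type*} [Ring R] [AddCommGroup M]
    [AddCommGroup M₂] [Module R M] [Module R M₂] (e : M ≃ₗ[R] M₂) (g' : M →ₗ[R] M₂)
    (p : Submodule R M₂) (h : Set.MapsTo ((g' - e.toLinearMap) ∘ₗ e.symm.toLinearMap) p p)
    {u : M} (hu : e u ∈ p) : g' u ∈ p := by
  have hg' : g' u = ((g' - e.toLinearMap) ∘ₗ e.symm.toLinearMap) (e u) + e u := by simp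
  exact hg' ▸ add_mem (h hu) hu

theorem stmt_6_general
    (𝒪 : Type*) [CommRing 𝒪]
    (K : Type*) [Field K] [Algebra 𝒪 K]
    (A : Type*) [Ring A] [Algebra K A] [Algebra 𝒪 A]
    (𝓜 : Subalgebra 𝒪 A)
    (V : Type*) [AddCommGroup V] [Module 𝒪 V]
    [Module A V]
    (W : Type*) [AddCommGroup W] [Module K W] [Module 𝒪 W] [IsScalarTower 𝒪 K W]
    [Module A W] [IsScalarTower K A W]
    (X : Submodule 𝒪 V)
    (Y : Submodule 𝒪 W)
    -- `𝕴`, a set of `𝓜`-equivariant endomorphisms of `𝓜Y`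
    (I : Set ((Submodule.span 𝒪 {w : W | ∃ a ∈ 𝓜, ∃ y ∈ Y, w = a • y}) →ₗ[𝒪]
      (Submodule.span 𝒪 {w : W | ∃ a ∈ 𝓜, ∃ y ∈ Y, w = a • y})))
    -- `𝕴` is a two-sided ideal of `S`
    (hIdeal : ∀ φ ∈ I, ∀ s : (Submodule.span 𝒪 {w : W | ∃ a ∈ 𝓜, ∃ y ∈ Y, w = a • y}) →ₗ[𝒪]
        (Submodule.span 𝒪 {w : W | ∃ a ∈ 𝓜, ∃ y ∈ Y, w = a • y}),
      IsEquivMap (𝓜 : Set A)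
        (Submodule.span 𝒪 {w : W | ∃ a ∈ 𝓜, ∃ y ∈ Y, w = a • y})
        (Submodule.span 𝒪 {w : W | ∃ a ∈ 𝓜, ∃ y ∈ Y, w = a • y}) s →
      (s ∘ₗ φ ∈ I ∧ φ ∘ₗ s ∈ I))
    -- `𝕴 ⊆ T = {s ∈ S : s(Y) ⊆ Y}`
    (hIT : ∀ φ ∈ I, ∀ (w : W) (hw : w ∈ Submodule.span 𝒪 {w : W | ∃ a ∈ 𝓜, ∃ y ∈ Y, w = a • y}),
      w ∈ Y → ((φ ⟨w, hw⟩ : Submodule.span 𝒪 {w : W | ∃ a ∈ 𝓜, ∃ y ∈ Y, w = a • y}) : W) ∈ Y)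
    -- `f : 𝓜X → 𝓜Y` is an isomorphism of `𝓜`-lattices
    (f : (Submodule.span 𝒪 {v : V | ∃ a ∈ 𝓜, ∃ x ∈ X, v = a • x}) →ₗ[𝒪]
      (Submodule.span 𝒪 {w : W | ∃ a ∈ 𝓜, ∃ y ∈ Y, w = a • y}))
    -- `g, g′ ∈ Aut_𝓜(𝓜Y)`
    (g g' : (Submodule.span 𝒪 {w : W | ∃ a ∈ 𝓜, ∃ y ∈ Y, w = a • y}) →ₗ[𝒪]
      (Submodule.span 𝒪 {w : W | ∃ a ∈ 𝓜, ∃ y ∈ Y, w = a • y}))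
    (hgb : Function.Bijective g)
    (hge : IsEquivMap (𝓜 : Set A)
      (Submodule.span 𝒪 {w : W | ∃ a ∈ 𝓜, ∃ y ∈ Y, w = a • y})
      (Submodule.span 𝒪 {w : W | ∃ a ∈ 𝓜, ∃ y ∈ Y, w = a • y}) g)
    -- `g′ − g ∈ 𝕴`
    (hgg' : g' - g ∈ I)
    -- `(g ∘ f)(X) ⊆ Y`
    (hgf : ∀ (x : V) (hx' : x ∈ Submodule.span 𝒪 {v : V | ∃ a ∈ 𝓜, ∃ x ∈ X, v = a • x}),
      x ∈ X → ((g (f ⟨x, hx'⟩) :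
        Submodule.span 𝒪 {w : W | ∃ a ∈ 𝓜, ∃ y ∈ Y, w = a • y}) : W) ∈ Y) :
    -- then `(g′ ∘ f)(X) ⊆ Y`
    ∀ (x : V) (hx' : x ∈ Submodule.span 𝒪 {v : V | ∃ a ∈ 𝓜, ∃ x ∈ X, v = a • x}),
      x ∈ X → ((g' (f ⟨x, hx'⟩) :
        Submodule.span 𝒪 {w : W | ∃ a ∈ 𝓜, ∃ y ∈ Y, w = a • y}) : W) ∈ Y := by
  have := smulCommClass_of_isScalarTower 𝒪 K A W
  let e := LinearEquiv.ofBijective g hgb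
  have hst : SetStable (𝓜 : Set A) (Submodule.span 𝒪 {w : W | ∃ a ∈ 𝓜, ∃ y ∈ Y, w = a • y}) :=
    setStable_span_smul 𝓜.toSubmonoid (Y : Set W)
  have he_symm := IsEquivMap.symm e hge hst
  have hI_right : (g' - g) ∘ₗ e.symm.toLinearMap ∈ I := (hIdeal _ hgg' _ he_symm).2
  intro x hx' hx
  exact apply_mem_of_mapsTo_sub_comp_symm e g' (Y.comap (Submodule.subtype _))
    (fun z hz => hIT _ hI_right z z.2 hz) (hgf x hx' hx)

/-- Let `S = End_𝓜(𝓜Y)`, identify `T = End_Λ(Y)` with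
`{s ∈ S : s(Y) ⊆ Y}`, and let `𝕴 ⊆ T` be a full two-sided ideal of `S`.  If
`f : 𝓜X → 𝓜Y` is an isomorphism of `𝓜`-lattices and `g, g′ ∈ Aut_𝓜(𝓜Y)` with
`g′ − g ∈ 𝕴`, then `(g ∘ f)(X) ⊆ Y` implies `(g′ ∘ f)(X) ⊆ Y`. -/
theorem stmt_6
    (𝒪 : Type*) [CommRing 𝒪] [IsDomain 𝒪] [IsDedekindDomain 𝒪]
    (K : Type*) [Field K] [Algebra 𝒪 K] [IsFractionRing 𝒪 K]
    (hOK : ¬ Function.Surjective (algebraMap 𝒪 K))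
    (A : Type*) [Ring A] [Algebra K A] [Algebra 𝒪 A] [IsScalarTower 𝒪 K A]
    [FiniteDimensional K A] [IsSemisimpleRing A] [Algebra.IsSeparable K A]
    (Λ 𝓜 : Subalgebra 𝒪 A) (hΛ : IsOrder 𝒪 K A Λ)
    (h𝓜 : IsMaximalOrder 𝒪 K A 𝓜) (hΛ𝓜 : Λ ≤ 𝓜)
    (V : Type*) [AddCommGroup V] [Module K V] [Module 𝒪 V] [IsScalarTower 𝒪 K V]
    [Module A V] [IsScalarTower K A V]
    (W : Type*) [AddCommGroup W] [Module K W] [Module 𝒪 W] [IsScalarTower 𝒪 K W]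
    [Module A W] [IsScalarTower K A W]
    (X : Submodule 𝒪 V) (hXfg : X.FG) (hXst : SetStable (Λ : Set A) X)
    (Y : Submodule 𝒪 W) (hYfg : Y.FG) (hYst : SetStable (Λ : Set A) Y)
    -- `𝕴`, a set of `𝓜`-equivariant endomorphisms of `𝓜Y`
    (I : Set ((Submodule.span 𝒪 {w : W | ∃ a ∈ 𝓜, ∃ y ∈ Y, w = a • y}) →ₗ[𝒪]
      (Submodule.span 𝒪 {w : W | ∃ a ∈ 𝓜, ∃ y ∈ Y, w = a • y})))
    -- `𝕴 ⊆ S = End_𝓜(𝓜Y)`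
    (hIS : ∀ φ ∈ I, IsEquivMap (𝓜 : Set A)
      (Submodule.span 𝒪 {w : W | ∃ a ∈ 𝓜, ∃ y ∈ Y, w = a • y})
      (Submodule.span 𝒪 {w : W | ∃ a ∈ 𝓜, ∃ y ∈ Y, w = a • y}) φ)
    -- `𝕴` is an additive subgroup
    (hI0 : (0 : (Submodule.span 𝒪 {w : W | ∃ a ∈ 𝓜, ∃ y ∈ Y, w = a • y}) →ₗ[𝒪]
      (Submodule.span 𝒪 {w : W | ∃ a ∈ 𝓜, ∃ y ∈ Y, w = a • y})) ∈ I)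
    (hIsub : ∀ φ ∈ I, ∀ ψ ∈ I, φ - ψ ∈ I)
    -- `𝕴` is a two-sided ideal of `S`
    (hIdeal : ∀ φ ∈ I, ∀ s : (Submodule.span 𝒪 {w : W | ∃ a ∈ 𝓜, ∃ y ∈ Y, w = a • y}) →ₗ[𝒪]
        (Submodule.span 𝒪 {w : W | ∃ a ∈ 𝓜, ∃ y ∈ Y, w = a • y}),
      IsEquivMap (𝓜 : Set A)
        (Submodule.span 𝒪 {w : W | ∃ a ∈ 𝓜, ∃ y ∈ Y, w = a • y})
        (Submodule.span 𝒪 {w : W | ∃ a ∈ 𝓜, ∃ y ∈ Y, w = a • y}) s →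
      (s ∘ₗ φ ∈ I ∧ φ ∘ₗ s ∈ I))
    -- `𝕴 ⊆ T = {s ∈ S : s(Y) ⊆ Y}`
    (hIT : ∀ φ ∈ I, ∀ (w : W) (hw : w ∈ Submodule.span 𝒪 {w : W | ∃ a ∈ 𝓜, ∃ y ∈ Y, w = a • y}),
      w ∈ Y → ((φ ⟨w, hw⟩ : Submodule.span 𝒪 {w : W | ∃ a ∈ 𝓜, ∃ y ∈ Y, w = a • y}) : W) ∈ Y)
    -- `𝕴` is full: every element of `S` has a nonzero `𝒪`-multiple in `𝕴`
    (hIfull : ∀ s : (Submodule.span 𝒪 {w : W | ∃ a ∈ 𝓜, ∃ y ∈ Y, w = a • y}) →ₗ[𝒪]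
        (Submodule.span 𝒪 {w : W | ∃ a ∈ 𝓜, ∃ y ∈ Y, w = a • y}),
      IsEquivMap (𝓜 : Set A)
        (Submodule.span 𝒪 {w : W | ∃ a ∈ 𝓜, ∃ y ∈ Y, w = a • y})
        (Submodule.span 𝒪 {w : W | ∃ a ∈ 𝓜, ∃ y ∈ Y, w = a • y}) s →
      ∃ r : 𝒪, r ≠ 0 ∧ r • s ∈ I)
    -- `f : 𝓜X → 𝓜Y` is an isomorphism of `𝓜`-lattices
    (f : (Submodule.span 𝒪 {v : V | ∃ a ∈ 𝓜, ∃ x ∈ X, v = a • x}) →ₗ[𝒪]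
      (Submodule.span 𝒪 {w : W | ∃ a ∈ 𝓜, ∃ y ∈ Y, w = a • y}))
    (hfb : Function.Bijective f)
    (hfe : IsEquivMap (𝓜 : Set A)
      (Submodule.span 𝒪 {v : V | ∃ a ∈ 𝓜, ∃ x ∈ X, v = a • x})
      (Submodule.span 𝒪 {w : W | ∃ a ∈ 𝓜, ∃ y ∈ Y, w = a • y}) f)
    -- `g, g′ ∈ Aut_𝓜(𝓜Y)`
    (g g' : (Submodule.span 𝒪 {w : W | ∃ a ∈ 𝓜, ∃ y ∈ Y, w = a • y}) →ₗ[𝒪]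
      (Submodule.span 𝒪 {w : W | ∃ a ∈ 𝓜, ∃ y ∈ Y, w = a • y}))
    (hgb : Function.Bijective g)
    (hge : IsEquivMap (𝓜 : Set A)
      (Submodule.span 𝒪 {w : W | ∃ a ∈ 𝓜, ∃ y ∈ Y, w = a • y})
      (Submodule.span 𝒪 {w : W | ∃ a ∈ 𝓜, ∃ y ∈ Y, w = a • y}) g)
    (hg'b : Function.Bijective g')
    (hg'e : IsEquivMap (𝓜 : Set A)
      (Submodule.span 𝒪 {w : W | ∃ a ∈ 𝓜, ∃ y ∈ Y, w = a • y})
      (Submodule.span 𝒪 {w : W | ∃ a ∈ 𝓜, ∃ y ∈ Y, w = a • y}) g')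
    -- `g′ − g ∈ 𝕴`
    (hgg' : g' - g ∈ I)
    -- `(g ∘ f)(X) ⊆ Y`
    (hgf : ∀ (x : V) (hx' : x ∈ Submodule.span 𝒪 {v : V | ∃ a ∈ 𝓜, ∃ x ∈ X, v = a • x}),
      x ∈ X → ((g (f ⟨x, hx'⟩) :
        Submodule.span 𝒪 {w : W | ∃ a ∈ 𝓜, ∃ y ∈ Y, w = a • y}) : W) ∈ Y) :
    -- then `(g′ ∘ f)(X) ⊆ Y`
    ∀ (x : V) (hx' : x ∈ Submodule.span 𝒪 {v : V | ∃ a ∈ 𝓜, ∃ x ∈ X, v = a • x}),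
      x ∈ X → ((g' (f ⟨x, hx'⟩) :
        Submodule.span 𝒪 {w : W | ∃ a ∈ 𝓜, ∃ y ∈ Y, w = a • y}) : W) ∈ Y :=
  stmt_6_general 𝒪 K A 𝓜 V W X Y I hIdeal hIT f g g' hgb hge hgg' hgf
end
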